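/- For any n × n complex matrix A, any c ∈ ℝ, and any n × n Hermitian matrix Z, if the 2n × 2n block matrix [[cIₙ + Z, A], [A*, cIₙ − Z]] is positive semidefinite, then r(A) ≤ c, where r(A) = max{|v* A v| : v ∈ ℂⁿ, ‖v‖₂ = 1}. -/

import Mathlib

open Complex Matrix ComplexOrder

/-- The numerical radius of a complex `n × n` matrix:
`r(A) = max {|v* A v| : v ∈ ℂⁿ, ‖v‖₂ = 1}`. -/
noncomputable def numRad {n : ℕ} (A : Matrix (Fin n) (Fin n) ℂ) : ℝ :=
  sSup {x : ℝ | ∃ v : Fin n → ℂ, (∑ i, ‖v i‖ ^ 2) = 1 ∧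
    x = ‖star v ⬝ᵥ A *ᵥ v‖}

/-- `H(θ) = (1/2)(e^{iθ} A + e^{-iθ} A*)`. -/
noncomputable def Hmat {n : ℕ} (A : Matrix (Fin n) (Fin n) ℂ) (θ : ℝ) :
    Matrix (Fin n) (Fin n) ℂ :=
  (1 / 2 : ℂ) • (Complex.exp (θ * Complex.I) • A + Complex.exp (-(θ * Complex.I)) • Aᴴ)

/-- The largest eigenvalue of a Hermitian matrix. -/
noncomputable def lamMax {n : ℕ} {M : Matrix (Fin n) (Fin n) ℂ} (hM : M.IsHermitian) : ℝ :=
  ⨆ i, hM.eigenvalues i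

private lemma key_bound {n : ℕ} (A : Matrix (Fin n) (Fin n) ℂ)
    (c : ℝ) (Z : Matrix (Fin n) (Fin n) ℂ)
    (hPSD : (Matrix.fromBlocks ((c : ℂ) • 1 + Z) A Aᴴ ((c : ℂ) • 1 - Z)).PosSemidef)
    (v : Fin n → ℂ) (hv : (∑ i, ‖v i‖ ^ 2) = 1) :
    ‖star v ⬝ᵥ A *ᵥ v‖ ≤ c := by
  set t : ℂ := star v ⬝ᵥ A *ᵥ v with ht
  set α : ℂ := if t = 0 then 1 else -(t / ‖t‖) with hα
  have habs0 : t ≠ 0 → (‖t‖ : ℂ) ≠ 0 := by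
    intro h0
    simpa using h0
  have hαt : (starRingEnd ℂ) α * t = -(‖t‖ : ℂ) := by
    by_cases h0 : t = 0
    · simp [hα, h0]
    · rw [hα, if_neg h0]
      rw [map_neg, map_div₀, Complex.conj_ofReal]
      have hne := habs0 h0
      field_simp
      rw [mul_comm, Complex.mul_conj, Complex.normSq_eq_norm_sq]
      push_cast
      ring
  have hα1 : (starRingEnd ℂ) α * α = 1 := by
    by_cases h0 : t = 0
    · simp [hα, h0]
    · rw [hα, if_neg h0]
      rw [map_neg, map_div₀, Complex.conj_ofReal]
      have := habs0 h0
      field_simp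
      rw [mul_comm, Complex.mul_conj, Complex.normSq_eq_norm_sq]
      push_cast
      ring
  have hαt' : α * (starRingEnd ℂ) t = -(‖t‖ : ℂ) := by
    have := congrArg (starRingEnd ℂ) hαt
    simpa [_root_.map_mul, mul_comm, Complex.conj_ofReal] using this
  have hvv : star v ⬝ᵥ v = 1 := by
    have : star v ⬝ᵥ v = ((∑ i, ‖v i‖ ^ 2 : ℝ) : ℂ) := by
      push_cast
      simp only [dotProduct, Pi.star_apply]
      refine Finset.sum_congr rfl fun i _ => ?_
      rw [Complex.star_def, mul_comm, Complex.mul_conj, Complex.normSq_eq_norm_sq]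
      push_cast
      ring
    rw [this, hv]
    norm_num
  have hconj : star v ⬝ᵥ Aᴴ *ᵥ v = (starRingEnd ℂ) t := by
    have h1 : star v ⬝ᵥ Aᴴ *ᵥ v = star (star (Aᴴ *ᵥ v) ⬝ᵥ v) :=
      Matrix.star_dotProduct _ _
    rw [h1, Matrix.star_mulVec, Matrix.conjTranspose_conjTranspose,
      ← Matrix.dotProduct_mulVec, ht]
    rfl
  -- the two quadratic forms with the diagonal blocks
  set q : ℂ := star v ⬝ᵥ Z *ᵥ v with hq
  have e1 : star v ⬝ᵥ (((c : ℂ) • 1 + Z) *ᵥ v) = (c : ℂ) + q := by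
    rw [Matrix.add_mulVec, dotProduct_add, Matrix.smul_mulVec,
      Matrix.one_mulVec, dotProduct_smul, smul_eq_mul, hvv, mul_one]
  have e2 : star v ⬝ᵥ (((c : ℂ) • 1 - Z) *ᵥ v) = (c : ℂ) - q := by
    rw [Matrix.sub_mulVec, dotProduct_sub, Matrix.smul_mulVec,
      Matrix.one_mulVec, dotProduct_smul, smul_eq_mul, hvv, mul_one]
  set w : (Fin n ⊕ Fin n) → ℂ := Sum.elim (α • v) v with hw
  have h := hPSD.dotProduct_mulVec_nonneg w
  have hcomp : star w ⬝ᵥ ((Matrix.fromBlocks ((c : ℂ) • 1 + Z) A Aᴴ ((c : ℂ) • 1 - Z)) *ᵥ w)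
      = ((2 * c - 2 * ‖t‖ : ℝ) : ℂ) := by
    rw [hw, Matrix.fromBlocks_mulVec, Function.star_sumElim,
      sumElim_dotProduct_sumElim, dotProduct_add, dotProduct_add]
    simp only [Sum.elim_comp_inl, Sum.elim_comp_inr]
    have hsv : star (α • v) = (starRingEnd ℂ) α • star v := by
      funext i; simp [Pi.smul_apply]
    rw [hsv]
    rw [Matrix.mulVec_smul, Matrix.mulVec_smul]
    simp only [smul_dotProduct, dotProduct_smul, smul_eq_mul]
    rw [e1, e2, hconj, ← ht]
    rw [show α * ((starRingEnd ℂ) α * ((c : ℂ) + q)) = ((starRingEnd ℂ) α * α) * ((c:ℂ) + q) by ring,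
      hα1, one_mul, hαt, hαt']
    push_cast
    ring
  rw [hcomp] at h
  rw [Complex.zero_le_real] at h
  linarith

theorem numRad_le_of_sdp_feasible {n : ℕ} (hn : 0 < n) (A : Matrix (Fin n) (Fin n) ℂ)
    (c : ℝ) (Z : Matrix (Fin n) (Fin n) ℂ) (hZ : Z.IsHermitian)
    (hPSD : (Matrix.fromBlocks ((c : ℂ) • 1 + Z) A Aᴴ ((c : ℂ) • 1 - Z)).PosSemidef) :
    numRad A ≤ c := by
  have hc : 0 ≤ c := by
    set v : Fin n → ℂ := Pi.single ⟨0, hn⟩ 1 with hv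
    have hnorm : (∑ i, ‖v i‖ ^ 2) = 1 := by
      rw [hv]
      rw [Finset.sum_eq_single (⟨0, hn⟩ : Fin n)]
      · simp
      · intro b _ hb; simp [Pi.single_apply, hb]
      · simp
    have := key_bound A c Z hPSD v hnorm
    exact le_trans (norm_nonneg _) this
  apply Real.sSup_le _ hc
  rintro x ⟨v, hv, rfl⟩
  exact key_bound A c Z hPSD v hv
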